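/- Let C be a right Markov code for (X_A, σ_A), where A is an irreducible non-permutation {0,1}-matrix. Then the one-sided topological Markov shifts (X_{A(C)}, σ_{A(C)}) and (X_A, σ_A) are continuously orbit equivalent. -/

import Mathlib

/-!
A prefix code with the unique factorization property cuts every point of `X_A` uniquely into
an infinite concatenation of code words `ω (f 0) ω (f 1) ⋯`, and consecutive code words
occurring in a point of `X_A` are exactly the allowed transitions of `A(C)`. So concatenation
`f ↦ ω (f 0) ω (f 1) ⋯` is a bijection `X_{A(C)} → X_A`; its `n`-th letter depends only on
`f 0, …, f n`, so it is continuous, hence a homeomorphism of compact spaces. It carries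
`σ_{A(C)}` to `σ_A^{|ω (f 0)|}`. Conversely, shift invariance rewrites the tail of the first
`L` code words of `y ∈ X_A` as a concatenation of code words `l`, so the factorization of
`σ_A y` is `l` followed by the factorization of `y` from its `L`-th block on.
-/

namespace TMS

/-- A `{0,1}` transition matrix on `N` symbols, as a `Bool`-valued function. -/
abbrev Mat (N : ℕ) := Fin N → Fin N → Bool

/-- A finite word is (locally) admissible: all consecutive transitions are allowed. -/
def Adm {N : ℕ} (A : Mat N) (w : List (Fin N)) : Prop :=
  List.Chain' (fun a b => A a b = true) w

instance {N : ℕ} (A : Mat N) (w : List (Fin N)) : Decidable (Adm A w) :=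
  inferInstanceAs (Decidable (List.IsChain (fun a b => A a b = true) w))

/-- The one-sided shift space `X_A`. -/
def SSpace {N : ℕ} (A : Mat N) : Set (ℕ → Fin N) :=
  {x | ∀ n, A (x n) (x (n + 1)) = true}

/-- The shift on sequences. -/
def shift {N : ℕ} (x : ℕ → Fin N) : ℕ → Fin N := fun n => x (n + 1)

/-- The shift as a self-map of the shift space. -/
def shiftS {N : ℕ} (A : Mat N) (x : ↥(SSpace A)) : ↥(SSpace A) :=
  ⟨shift x.1, fun n => x.2 (n + 1)⟩

/-- `x` begins with the finite word `w`. -/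
def Begins {N : ℕ} (x : ℕ → Fin N) (w : List (Fin N)) : Prop :=
  ∀ i (h : i < w.length), x i = w.get ⟨i, h⟩

/-- A word belongs to `B_*(X_A)`: it occurs at the beginning of some point of `X_A`. -/
def AdmX {N : ℕ} (A : Mat N) (w : List (Fin N)) : Prop :=
  ∃ x ∈ SSpace A, Begins x w

/-- The cylinder set `U_w ⊂ X_A`. -/
def Cyl {N : ℕ} (A : Mat N) (w : List (Fin N)) : Set (ℕ → Fin N) :=
  {x ∈ SSpace A | Begins x w}

/-- A finite family of words is a prefix code: the words are pairwise distinct and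
no word is an initial segment of another. -/
def IsPrefixCode {N M : ℕ} (ω : Fin M → List (Fin N)) : Prop :=
  Function.Injective ω ∧ ∀ i j : Fin M, i ≠ j → ¬ (ω i <+: ω j)

/-- Starting position of the `n`-th block in the factorization of a point along
the index sequence `f`. -/
def pos {N M : ℕ} (ω : Fin M → List (Fin N)) (f : ℕ → Fin M) : ℕ → ℕ
  | 0 => 0
  | n + 1 => pos ω f n + (ω (f n)).length

/-- The point `x` factors as the infinite concatenation `ω (f 0) ω (f 1) ⋯`. -/
def Factors {N M : ℕ} (ω : Fin M → List (Fin N)) (x : ℕ → Fin N) (f : ℕ → Fin M) : Prop :=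
  ∀ n, Begins (fun k => x (pos ω f n + k)) (ω (f n))

/-- Matrix irreducibility: from any symbol there is an admissible path to any other. -/
def IrreducibleMat {N : ℕ} (A : Mat N) : Prop :=
  ∀ i j : Fin N, ∃ w : List (Fin N), Adm A (i :: (w ++ [j]))

/-- Permutation matrix: every row and every column has exactly one nonzero entry. -/
def IsPermMat {N : ℕ} (A : Mat N) : Prop :=
  (∀ i, ∃! j, A i j = true) ∧ (∀ j, ∃! i, A i j = true)

/-- A right Markov code for `(X_A, σ_A)`: a prefix code of nonempty admissible words
with the unique factorization property, shift invariance, and irreducibility. -/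
structure IsRightMarkovCode {N M : ℕ} (A : Mat N) (ω : Fin M → List (Fin N)) : Prop where
  adm : ∀ i, AdmX A (ω i)
  ne : ∀ i, ω i ≠ []
  prefixCode : IsPrefixCode ω
  uniqueFact : ∀ γ, AdmX A γ → ∃ η, AdmX A (γ ++ η) ∧
      ∃! l : List (Fin M), γ ++ η = (l.map ω).flatten
  shiftInv : ∃ L : ℕ, 0 < L ∧ ∀ l : List (Fin M), l.length = L → AdmX A ((l.map ω).flatten) →
      ∃ l' : List (Fin M), ((l.map ω).flatten).tail = (l'.map ω).flatten
  irr : ∀ i j, ∃ l : List (Fin M), AdmX A (ω i ++ (l.map ω).flatten ++ ω j)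

/-- The induced matrix `A(C)`: `A(C)(i,j) = 1` iff `ω i ω j` is admissible. -/
def matC {N M : ℕ} (A : Mat N) (ω : Fin M → List (Fin N)) : Mat M :=
  fun i j => decide (Adm A (ω i ++ ω j))

/-- Continuous orbit equivalence of one-sided topological Markov shifts. -/
def COE {N N' : ℕ} (A : Mat N) (B : Mat N') : Prop :=
  ∃ h : ↥(SSpace A) ≃ₜ ↥(SSpace B),
    (∃ k₁ l₁ : ↥(SSpace A) → ℕ, Continuous k₁ ∧ Continuous l₁ ∧
      ∀ x, (shiftS B)^[k₁ x] (h (shiftS A x)) = (shiftS B)^[l₁ x] (h x)) ∧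
    (∃ k₂ l₂ : ↥(SSpace B) → ℕ, Continuous k₂ ∧ Continuous l₂ ∧
      ∀ y, (shiftS A)^[k₂ y] (h.symm (shiftS B y)) = (shiftS A)^[l₂ y] (h.symm y))

variable {N M : ℕ}

section Words

variable {x : ℕ → Fin N}

lemma begins_append {u v : List (Fin N)} :
    Begins x (u ++ v) ↔ Begins x u ∧ Begins (fun k => x (u.length + k)) v := by
  simp only [Begins, List.get_eq_getElem, List.length_append]
  constructor
  · intro h
    exact ⟨fun i hi => by rw [h i (by omega), List.getElem_append_left hi],
      fun i hi => by rw [h _ (by omega), List.getElem_append_right (by omega)]; simp⟩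
  · rintro ⟨hu, hv⟩ i hi
    rw [List.getElem_append]
    split_ifs with h
    · exact hu i h
    · have := hv (i - u.length) (by omega)
      rwa [Nat.add_sub_cancel' (not_lt.1 h)] at this

lemma Begins.of_prefix {u v : List (Fin N)} (hv : Begins x v) (h : u <+: v) : Begins x u := by
  obtain ⟨t, rfl⟩ := h
  exact (begins_append.1 hv).1

lemma Begins.prefix_of_length_le {u v : List (Fin N)} (hu : Begins x u) (hv : Begins x v)
    (h : u.length ≤ v.length) : u <+: v := by
  rw [List.prefix_iff_eq_take]
  refine List.ext_getElem (by simp [h]) fun i h₁ _ => ?_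
  have := hu i h₁
  have := hv i (by omega)
  simp_all

lemma Begins.tail {w : List (Fin N)} (h : Begins x w) : Begins (shift x) w.tail := by
  intro i hi
  simp only [List.length_tail] at hi
  simpa [shift] using h (i + 1) (by omega)

lemma IsPrefixCode.eq_of_begins {ω : Fin M → List (Fin N)} (hω : IsPrefixCode ω) {i j : Fin M}
    (hi : Begins x (ω i)) (hj : Begins x (ω j)) : i = j := by
  by_contra hne
  rcases le_total (ω i).length (ω j).length with h | h
  · exact hω.2 i j hne (hi.prefix_of_length_le hj h)
  · exact hω.2 j i (Ne.symm hne) (hj.prefix_of_length_le hi h)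

variable {A : Mat N} {w : List (Fin N)}

lemma adm_iff_getElem : Adm A w ↔ ∀ i (h : i + 1 < w.length), A w[i] w[i + 1] = true :=
  List.isChain_iff_getElem

lemma Begins.adm (hx : x ∈ SSpace A) (hb : Begins x w) : Adm A w := by
  refine adm_iff_getElem.2 fun i h => ?_
  have h₁ := hb i (by omega)
  have h₂ := hb (i + 1) h
  simp only [List.get_eq_getElem] at h₁ h₂
  rw [← h₁, ← h₂]
  exact hx i

lemma Adm.apply_of_begins (hw : Adm A w) (hb : Begins x w) {n : ℕ} (hn : n + 1 < w.length) :
    A (x n) (x (n + 1)) = true := by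
  rw [adm_iff_getElem] at hw
  have h₁ := hb n (by omega)
  have h₂ := hb (n + 1) hn
  simp only [List.get_eq_getElem] at h₁ h₂
  rw [h₁, h₂]
  exact hw n hn

end Words

section ShiftSpace

variable {A : Mat N}

lemma drop_mem_sspace {x : ℕ → Fin N} (hx : x ∈ SSpace A) (p : ℕ) :
    (fun k => x (p + k)) ∈ SSpace A := fun n => hx (p + n)

lemma shiftS_iterate_val (x : SSpace A) (k : ℕ) :
    ((shiftS A)^[k] x).1 = fun n => x.1 (k + n) := by
  induction k generalizing x with
  | zero => simp
  | succ k ih =>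
    rw [Function.iterate_succ_apply, ih]
    funext n
    simp only [shiftS, shift, Nat.add_right_comm]

lemma isClosed_sspace : IsClosed (SSpace A) := by
  simp only [SSpace, Set.ofPred_forall]
  exact isClosed_iInter fun n => isClosed_eq (by fun_prop) continuous_const

instance : CompactSpace (SSpace A) :=
  isCompact_iff_compactSpace.mp isClosed_sspace.isCompact

lemma continuous_of_forall_lt_eq {α β : Type*} [TopologicalSpace α] [DiscreteTopology α]
    [TopologicalSpace β] {S : Set (ℕ → α)} {φ : S → β} (K : ℕ)
    (h : ∀ x y : S, (∀ k < K, x.1 k = y.1 k) → φ x = φ y) : Continuous φ := by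
  refine IsLocallyConstant.continuous <| (IsLocallyConstant.iff_eventually_eq φ).2 fun x => ?_
  have : ∀ᶠ y in nhds x, ∀ k < K, y.1 k = x.1 k :=
    (Filter.eventually_all_finite (Set.finite_lt_nat K)).2 fun k _ =>
      ((continuous_apply k).comp continuous_subtype_val).continuousAt.eventually_mem
        (isOpen_discrete {x.1 k} |>.mem_nhds rfl)
  exact this.mono fun y hy => h y x hy

end ShiftSpace

section Factorization

variable {ω : Fin M → List (Fin N)} {x y : ℕ → Fin N} {f g : ℕ → Fin M}

lemma le_pos (hne : ∀ i, ω i ≠ []) (f : ℕ → Fin M) (n : ℕ) : n ≤ pos ω f n := by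
  induction n with
  | zero => exact le_rfl
  | succ n ih => have := List.length_pos_iff.2 (hne (f n)); rw [pos]; omega

lemma pos_congr {n : ℕ} (h : ∀ k < n, f k = g k) : pos ω f n = pos ω g n := by
  induction n with
  | zero => rfl
  | succ n ih => rw [pos, pos, ih fun k hk => h k (by omega), h n (by omega)]

lemma pos_add (f : ℕ → Fin M) (m n : ℕ) :
    pos ω f (m + n) = pos ω f m + pos ω (fun k => f (m + k)) n := by
  induction n with
  | zero => rfl
  | succ n ih => rw [← Nat.add_assoc, pos, pos, ih, Nat.add_assoc]

lemma pos_cons (a : Fin M) (g : ℕ → Fin M) (n : ℕ) :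
    pos ω (Stream'.cons a g) (n + 1) = (ω a).length + pos ω g n := by
  induction n with
  | zero => exact Nat.zero_add _
  | succ n ih =>
    show pos ω (Stream'.cons a g) (n + 1) + (ω (g n)).length = _
    rw [ih, pos, Nat.add_assoc]

def blocks (ω : Fin M → List (Fin N)) (f : ℕ → Fin M) (n : ℕ) : List (Fin N) :=
  (((List.range n).map f).map ω).flatten

lemma blocks_succ (n : ℕ) : blocks ω f (n + 1) = blocks ω f n ++ ω (f n) := by
  simp [blocks, List.range_succ]

lemma length_blocks (n : ℕ) : (blocks ω f n).length = pos ω f n := by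
  induction n with
  | zero => rfl
  | succ n ih => rw [blocks_succ, List.length_append, ih, pos]

lemma blocks_prefix_blocks {m n : ℕ} (h : m ≤ n) : blocks ω f m <+: blocks ω f n := by
  induction n, h using Nat.le_induction with
  | base => exact List.prefix_rfl
  | succ n _ ih => exact ih.trans (blocks_succ (f := f) n ▸ List.prefix_append _ _)

lemma blocks_congr {n : ℕ} (h : ∀ k < n, f k = g k) : blocks ω f n = blocks ω g n := by
  induction n with
  | zero => rfl
  | succ n ih => rw [blocks_succ, blocks_succ, ih fun k hk => h k (by omega), h n (by omega)]

lemma factors_iff_forall_begins_blocks : Factors ω x f ↔ ∀ n, Begins x (blocks ω f n) := by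
  refine ⟨fun h n => ?_, fun h n => ?_⟩
  · induction n with
    | zero => exact fun i hi => absurd hi (by simp [blocks])
    | succ n ih =>
      rw [blocks_succ, begins_append, length_blocks]
      exact ⟨ih, h n⟩
  · have := h (n + 1)
    rw [blocks_succ, begins_append, length_blocks] at this
    exact this.2

lemma Factors.begins_blocks (h : Factors ω x f) (n : ℕ) : Begins x (blocks ω f n) :=
  factors_iff_forall_begins_blocks.1 h n

lemma Factors.code_unique (hω : IsPrefixCode ω) (hf : Factors ω x f) (hg : Factors ω x g) :
    f = g := by
  funext n
  induction n using Nat.strong_induction_on with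
  | _ n ih => exact hω.eq_of_begins (hf n) (pos_congr (ω := ω) ih ▸ hg n)

lemma Factors.drop (h : Factors ω x f) (m : ℕ) :
    Factors ω (fun k => x (pos ω f m + k)) (fun k => f (m + k)) := by
  intro n
  simpa only [pos_add f m n, Nat.add_assoc] using h (m + n)

lemma Factors.cons {a : Fin M} (ha : Begins x (ω a))
    (hg : Factors ω (fun k => x ((ω a).length + k)) g) : Factors ω x (Stream'.cons a g)
  | 0 => fun i hi => (congrArg x (Nat.zero_add i)).trans (ha i hi)
  | n + 1 => fun i hi => by
    have := pos_cons (ω := ω) a g n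
    exact (congrArg x (by omega)).trans (hg n i hi)

lemma Factors.append {l : List (Fin M)} (hl : Begins x (l.map ω).flatten)
    (hg : Factors ω (fun k => x ((l.map ω).flatten.length + k)) g) :
    Factors ω x (l ++ₛ g) := by
  induction l generalizing x with
  | nil => exact (by simpa using hg : Factors ω x g)
  | cons a l ih =>
    rw [List.map_cons, List.flatten_cons, begins_append] at hl
    refine Factors.cons hl.1 (ih hl.2 ?_)
    simpa [Nat.add_assoc] using hg

lemma Factors.shift_of_tail_blocks (hne : ∀ i, ω i ≠ []) (hf : Factors ω x f) {L : ℕ}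
    (hL : 0 < L) {l : List (Fin M)} (hl : (blocks ω f L).tail = (l.map ω).flatten) :
    Factors ω (shift x) (l ++ₛ fun k => f (L + k)) := by
  refine Factors.append (hl ▸ (hf.begins_blocks L).tail) ?_
  have hlen : (l.map ω).flatten.length + 1 = pos ω f L := by
    have := le_pos hne f L
    rw [← hl, List.length_tail, length_blocks]
    omega
  have hx : (fun k => shift x ((l.map ω).flatten.length + k)) = fun k => x (pos ω f L + k) :=
    funext fun k => congrArg x (by omega)
  exact hx ▸ hf.drop L

end Factorization

section Concatenation

variable {A : Mat N} {ω : Fin M → List (Fin N)} {x : ℕ → Fin N} {f g : ℕ → Fin M}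

def conc (hne : ∀ i, ω i ≠ []) (f : ℕ → Fin M) (n : ℕ) : Fin N :=
  (blocks ω f (n + 1))[n]'(by rw [length_blocks]; exact le_pos hne f (n + 1))

lemma begins_conc (hne : ∀ i, ω i ≠ []) (f : ℕ → Fin M) (m : ℕ) :
    Begins (conc hne f) (blocks ω f m) := by
  intro i hi
  simp only [conc, List.get_eq_getElem]
  rcases le_total (i + 1) m with h | h
  · exact (blocks_prefix_blocks h).getElem _
  · exact ((blocks_prefix_blocks h).getElem hi).symm

lemma factors_conc (hne : ∀ i, ω i ≠ []) (f : ℕ → Fin M) : Factors ω (conc hne f) f :=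
  factors_iff_forall_begins_blocks.2 (begins_conc hne f)

lemma Factors.conc_eq (hne : ∀ i, ω i ≠ []) (h : Factors ω x f) : conc hne f = x :=
  funext fun n => (h.begins_blocks (n + 1) n _).symm

lemma Factors.point_unique (hne : ∀ i, ω i ≠ []) {y : ℕ → Fin N} (hx : Factors ω x f)
    (hy : Factors ω y f) : x = y :=
  (hx.conc_eq hne).symm.trans (hy.conc_eq hne)

lemma conc_congr (hne : ∀ i, ω i ≠ []) {n : ℕ} (h : ∀ k < n + 1, f k = g k) :
    conc hne f n = conc hne g n :=
  List.getElem_of_eq (blocks_congr h) _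

lemma adm_blocks_append (hne : ∀ i, ω i ≠ []) (hf : f ∈ SSpace (matC A ω)) (n : ℕ) :
    Adm A (blocks ω f n ++ ω (f n)) := by
  induction n with
  | zero => exact List.IsChain.infix (of_decide_eq_true (hf 0)) ⟨[], ω (f 1), by simp [blocks]⟩
  | succ n ih =>
    rw [blocks_succ]
    exact List.IsChain.append_overlap ih (of_decide_eq_true (hf n)) (hne _)

lemma conc_mem_sspace (hne : ∀ i, ω i ≠ []) (hf : f ∈ SSpace (matC A ω)) :
    conc hne f ∈ SSpace A := fun n => by
  have hlen := le_pos hne f (n + 2)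
  rw [← length_blocks, blocks_succ] at hlen
  exact (adm_blocks_append hne hf (n + 1)).apply_of_begins
    (blocks_succ (f := f) (n + 1) ▸ begins_conc hne f (n + 2)) (by omega)

lemma Factors.mem_sspace_matC (hx : x ∈ SSpace A) (h : Factors ω x f) :
    f ∈ SSpace (matC A ω) := fun n => by
  have hadm := (h.begins_blocks (n + 2)).adm hx
  rw [blocks_succ, blocks_succ, List.append_assoc] at hadm
  exact decide_eq_true (List.IsChain.infix hadm ⟨blocks ω f n, [], by simp⟩)

end Concatenation

namespace IsRightMarkovCode

variable {A : Mat N} {ω : Fin M → List (Fin N)}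

lemma exists_begins (hC : IsRightMarkovCode A ω) {x : ℕ → Fin N} (hx : x ∈ SSpace A) :
    ∃ i, Begins x (ω i) := by
  obtain ⟨K, hK⟩ : ∃ K, ∀ i, (ω i).length ≤ K :=
    ⟨_, fun i => Finset.le_sup (f := fun i => (ω i).length) (Finset.mem_univ i)⟩
  set γ := List.ofFn fun j : Fin (K + 1) => x j
  have hγ : Begins x γ := fun i hi => by simp only [γ, List.get_eq_getElem, List.getElem_ofFn]
  obtain ⟨η, -, l, hl, -⟩ := hC.uniqueFact γ ⟨x, hx, hγ⟩
  cases l with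
  | nil => simp [γ] at hl
  | cons a l =>
    refine ⟨a, hγ.of_prefix (List.prefix_of_prefix_length_le ?_ (List.prefix_append γ η) ?_)⟩
    · simp [hl]
    · simpa [γ] using (hK a).trans K.le_succ

lemma exists_factors (hC : IsRightMarkovCode A ω) {x : ℕ → Fin N} (hx : x ∈ SSpace A) :
    ∃ f, Factors ω x f := by
  choose c hc using fun y : SSpace A => hC.exists_begins y.2
  let d : ℕ → SSpace A := fun q => ⟨fun k => x (q + k), drop_mem_sspace hx q⟩
  let p : ℕ → ℕ := fun n => Nat.rec 0 (fun _ q => q + (ω (c (d q))).length) n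
  refine ⟨fun n => c (d (p n)), fun n => ?_⟩
  have hp : pos ω (fun n => c (d (p n))) n = p n := by
    induction n with
    | zero => rfl
    | succ n ih => rw [pos, ih]
  rw [hp]
  exact hc (d (p n))

end IsRightMarkovCode

section Homeomorph

variable {A : Mat N} {ω : Fin M → List (Fin N)}

def concMap (hne : ∀ i, ω i ≠ []) (f : SSpace (matC A ω)) : SSpace A :=
  ⟨conc hne f.1, conc_mem_sspace hne f.2⟩

lemma continuous_concMap (hne : ∀ i, ω i ≠ []) : Continuous (concMap (A := A) hne) := by
  refine Continuous.subtype_mk ?_ _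
  exact continuous_pi fun n => continuous_of_forall_lt_eq (n + 1) fun _ _ h => conc_congr hne h

lemma IsRightMarkovCode.bijective_concMap (hC : IsRightMarkovCode A ω) :
    Function.Bijective (concMap (A := A) hC.ne) := by
  refine ⟨fun f g hfg => Subtype.ext ?_, fun y => ?_⟩
  · have hg := factors_conc hC.ne g.1
    rw [← show conc hC.ne f.1 = conc hC.ne g.1 from congrArg Subtype.val hfg] at hg
    exact (factors_conc hC.ne f.1).code_unique hC.prefixCode hg
  · obtain ⟨f, hf⟩ := hC.exists_factors y.2
    exact ⟨⟨f, hf.mem_sspace_matC y.2⟩, Subtype.ext (hf.conc_eq hC.ne)⟩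

noncomputable def IsRightMarkovCode.concHomeomorph (hC : IsRightMarkovCode A ω) :
    SSpace (matC A ω) ≃ₜ SSpace A :=
  (continuous_concMap hC.ne).homeoOfEquivCompactToT2 (f := .ofBijective _ hC.bijective_concMap)

namespace IsRightMarkovCode

variable (hC : IsRightMarkovCode A ω)

lemma factors_concHomeomorph (f : SSpace (matC A ω)) : Factors ω (hC.concHomeomorph f).1 f.1 :=
  factors_conc hC.ne f.1

lemma factors_concHomeomorph_symm (y : SSpace A) :
    Factors ω y.1 (hC.concHomeomorph.symm y).1 := by
  simpa using hC.factors_concHomeomorph (hC.concHomeomorph.symm y)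

lemma concHomeomorph_shiftS (f : SSpace (matC A ω)) :
    hC.concHomeomorph (shiftS _ f) = (shiftS A)^[(ω (f.1 0)).length] (hC.concHomeomorph f) := by
  refine Subtype.ext ((hC.factors_concHomeomorph _).point_unique hC.ne ?_)
  rw [shiftS_iterate_val]
  have := (hC.factors_concHomeomorph f).drop 1
  simp only [pos, Nat.zero_add, Nat.add_comm 1] at this
  exact this

lemma concHomeomorph_symm_shiftS {L : ℕ} (hL : 0 < L) (y : SSpace A) {l : List (Fin M)}
    (hl : (blocks ω (hC.concHomeomorph.symm y).1 L).tail = (l.map ω).flatten) :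
    (shiftS _)^[l.length] (hC.concHomeomorph.symm (shiftS A y)) =
      (shiftS _)^[L] (hC.concHomeomorph.symm y) := by
  apply Subtype.ext
  rw [shiftS_iterate_val, shiftS_iterate_val,
    (hC.factors_concHomeomorph_symm (shiftS A y)).code_unique hC.prefixCode
      ((hC.factors_concHomeomorph_symm y).shift_of_tail_blocks hC.ne hL hl)]
  exact funext fun k => Stream'.get_append_right k l _

end IsRightMarkovCode

end Homeomorph

theorem matC_continuously_orbit_equivalent_general {N M : ℕ} (A : Mat N)
    (ω : Fin M → List (Fin N)) (hC : IsRightMarkovCode A ω) :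
    COE (matC A ω) A := by
  obtain ⟨L, hL, hshift⟩ := hC.shiftInv
  choose! r hr using hshift
  set h := hC.concHomeomorph
  have hrecode (y : SSpace A) :
      (blocks ω (h.symm y).1 L).tail = ((r ((List.range L).map (h.symm y).1)).map ω).flatten :=
    hr _ (by simp) ⟨y.1, y.2, (hC.factors_concHomeomorph_symm y).begins_blocks L⟩
  refine ⟨h, ⟨fun _ => 0, fun f => (ω (f.1 0)).length, continuous_const, ?_,
      hC.concHomeomorph_shiftS⟩,
    ⟨fun y => (r ((List.range L).map (h.symm y).1)).length, fun _ => L, ?_, continuous_const,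
      fun y => hC.concHomeomorph_symm_shiftS hL y (hrecode y)⟩⟩
  · exact continuous_of_forall_lt_eq 1 fun f g hfg => by rw [hfg 0 one_pos]
  · refine (continuous_of_forall_lt_eq (φ := fun f : SSpace (matC A ω) =>
      (r ((List.range L).map f.1)).length) L fun f g hfg => ?_).comp h.symm.continuous
    simp only [List.map_congr_left fun k hk => hfg k (List.mem_range.1 hk)]

/-- For a right Markov code `C` for `(X_A, σ_A)`, the Markov shifts
`(X_{A(C)}, σ_{A(C)})` and `(X_A, σ_A)` are continuously orbit equivalent. -/
theorem matC_continuously_orbit_equivalent {N M : ℕ} (A : Mat N)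
    (hA : IrreducibleMat A) (hnp : ¬ IsPermMat A)
    (ω : Fin M → List (Fin N)) (hC : IsRightMarkovCode A ω) :
    COE (matC A ω) A :=
  matC_continuously_orbit_equivalent_general A ω hC

end TMS
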